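/- arXiv:1612.09390 — 2 statements merged into one kernel-verified Lean document; each statement's English description precedes it below -/
import Mathlib

section
/- Let q = p^m with p an odd prime and let D be a skew set of F_q. Define the code C_D = {(Tr(a d))_{d∈D} : a ∈ F_q} of length n_3 = (q−1)/2 over F_p. Then for every 1 ≤ r ≤ m, the r-th generalized Hamming weight of C_D equals (1 − 1/p^r) · q/2. -/
/-!
The trace form of `F` over `𝔽_p` is nondegenerate and a skew set spans `F`, so `L` is injective
and every `r`-dimensional subcode is `L(H)` for an `r`-dimensional subspace `H ≤ F`. A codeword
`L a` with `a ∈ H` vanishes at `d` exactly when `d ∈ H^⊥` (for the trace form), a subspace of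
dimension `m - r`. A skew set meets every negation-closed set `S ∋ 0` in `(|S| - 1)/2` points, so
every `r`-dimensional subcode has support of the same size `(p^m - 1)/2 - (p^(m-r) - 1)/2`, which
is therefore the generalized Hamming weight.
-/

open scoped Classical in
/-- The `r`-th generalized Hamming weight of a linear code `C ≤ F_p^ι`. -/
noncomputable def ghw {p : ℕ} {ι : Type} [Fintype ι]
    (C : Submodule (ZMod p) (ι → ZMod p)) (r : ℕ) : ℕ :=
  sInf {k | ∃ U : Submodule (ZMod p) (ι → ZMod p), U ≤ C ∧
    Module.finrank (ZMod p) ↥U = r ∧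
    (Finset.univ.filter (fun i : ι => ∃ x ∈ U, x i ≠ 0)).card = k}

/-- `D ⊆ F_q^*` is a skew set if `D`, `-D` and `{0}` partition `F_q`. -/
def IsSkewSet {F : Type} [Field F] (D : Set F) : Prop :=
  (0 : F) ∉ D ∧ (∀ d ∈ D, -d ∉ D) ∧ ∀ x : F, x ≠ 0 → x ∈ D ∨ -x ∈ D

open Finset Pointwise Module

open scoped Classical in
noncomputable def codeSupport {R ι : Type*} [Semiring R] [Fintype ι]
    (U : Submodule R (ι → R)) : Finset ι :=
  univ.filter fun i => ∃ x ∈ U, x i ≠ 0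

theorem exists_card_codeSupport_eq_ghw {p : ℕ} {ι : Type} [Fintype ι]
    {C : Submodule (ZMod p) (ι → ZMod p)} {r : ℕ}
    (h : ∃ U ≤ C, finrank (ZMod p) U = r) :
    ∃ U ≤ C, finrank (ZMod p) U = r ∧ #(codeSupport U) = ghw C r := by
  obtain ⟨U, hUC, hU⟩ := h
  exact Nat.sInf_mem (s := {k | ∃ U ≤ C, finrank (ZMod p) U = r ∧ #(codeSupport U) = k})
    ⟨_, U, hUC, hU, rfl⟩

theorem exists_submodule_finrank_eq {K V : Type*} [DivisionRing K] [AddCommGroup V] [Module K V]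
    {r : ℕ} (h : r ≤ finrank K V) : ∃ H : Submodule K V, finrank K H = r := by
  obtain ⟨f, hf⟩ := exists_linearIndependent_of_le_finrank h
  exact ⟨Submodule.span K (Set.range f), by rw [finrank_span_eq_card hf, Fintype.card_fin]⟩

section BilinForm

variable {K V ι : Type*} [CommRing K] [AddCommGroup V] [Module K V]
  (B : LinearMap.BilinForm K V) (e : ι → V) (L : V →ₗ[K] ι → K)

theorem injective_of_separatingLeft_of_span_eq_top (hB : B.SeparatingLeft)
    (he : Submodule.span K (Set.range e) = ⊤) (hL : ∀ a i, L a i = B a (e i)) :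
    Function.Injective L := by
  rw [← LinearMap.ker_eq_bot, Submodule.eq_bot_iff]
  intro a ha
  have hBa : B a = 0 := LinearMap.ext_on_range he fun i => by
    simpa [hL] using congrFun (LinearMap.mem_ker.mp ha) i
  exact hB a fun y => by simp [hBa]

theorem mem_codeSupport_map_iff [Fintype ι] (hL : ∀ a i, L a i = B a (e i))
    (H : Submodule K V) (i : ι) : i ∈ codeSupport (H.map L) ↔ e i ∉ B.orthogonal H := by
  simp [codeSupport, LinearMap.BilinForm.mem_orthogonal_iff, hL]

end BilinForm

namespace IsSkewSet

variable {F : Type} [Field F] {D : Finset F}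

theorem span_eq_top (hD : IsSkewSet (D : Set F)) (K : Type*) [Ring K] [Module K F] :
    Submodule.span K (Set.range ((↑) : D → F)) = ⊤ := by
  have hDspan : ∀ d ∈ D, d ∈ Submodule.span K (Set.range ((↑) : D → F)) :=
    fun d hd => Submodule.subset_span ⟨⟨d, hd⟩, rfl⟩
  refine Submodule.eq_top_iff'.mpr fun x => ?_
  by_cases hx : x = 0
  · exact hx ▸ Submodule.zero_mem _
  rcases hD.2.2 x hx with h | h
  · exact hDspan x h
  · simpa using neg_mem (hDspan _ h)

theorem two_mul_card_inter_add_one [DecidableEq F] (hD : IsSkewSet (D : Set F)) {S : Finset F}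
    (h0 : 0 ∈ S) (hneg : ∀ x ∈ S, -x ∈ S) : 2 * #(D ∩ S) + 1 = #S := by
  obtain ⟨h0D, hDneg, hcover⟩ := hD
  have hsplit : S.erase 0 = D ∩ S ∪ -(D ∩ S) := by
    ext x
    simp only [mem_erase, mem_union, mem_inter, mem_neg']
    constructor
    · rintro ⟨hx0, hxS⟩
      exact (hcover x hx0).imp (⟨·, hxS⟩) (⟨·, hneg x hxS⟩)
    · rintro (⟨hxD, hxS⟩ | ⟨hxD, hxS⟩)
      · exact ⟨fun h => h0D (h ▸ hxD), hxS⟩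
      · exact ⟨fun h => h0D (by simpa [h] using hxD), by simpa using hneg _ hxS⟩
  have hdisj : Disjoint (D ∩ S) (-(D ∩ S)) := by
    rw [disjoint_left]
    intro x hx hx'
    rw [mem_neg', mem_inter] at hx'
    exact hDneg x (mem_inter.mp hx).1 hx'.1
  have := card_erase_add_one h0
  rw [hsplit, card_union_of_disjoint hdisj, card_neg] at this
  omega

theorem two_mul_card_codeSupport_add_card {K : Type*} [CommRing K] [Fintype F] [Module K F]
    (hD : IsSkewSet (D : Set F)) (B : LinearMap.BilinForm K F) (L : F →ₗ[K] D → K)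
    (hL : ∀ a (d : D), L a d = B a d) (H : Submodule K F) :
    2 * #(codeSupport (H.map L)) + Nat.card (B.orthogonal H) = Fintype.card F := by
  classical
  set W := (B.orthogonal H : Set F).toFinset
  have hsupp : #(codeSupport (H.map L)) = #(D \ W) := by
    rw [← card_map (Function.Embedding.subtype _)]
    congr 1
    ext x
    simp [mem_codeSupport_map_iff B _ L hL, W, and_comm]
  have hW : Nat.card (B.orthogonal H) = #W := Nat.card_eq_card_toFinset _
  have hDW := hD.two_mul_card_inter_add_one (S := W) (by simp [W])
    (fun x hx => by simpa [W] using hx)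
  have hDF := hD.two_mul_card_inter_add_one (S := univ) (mem_univ _) (fun _ _ => mem_univ _)
  have := card_sdiff_add_card_inter D W
  rw [inter_univ, card_univ] at hDF
  omega

end IsSkewSet

theorem stmt12_general (p m : ℕ) [Fact p.Prime]
    (F : Type) [Field F] [Fintype F] [Algebra (ZMod p) F]
    (hq : Fintype.card F = p ^ m)
    (D : Finset F) (hD : IsSkewSet (↑D : Set F))
    (L : F →ₗ[ZMod p] ({x // x ∈ D} → ZMod p))
    (hL : ∀ a (d : {x // x ∈ D}), L a d = Algebra.trace (ZMod p) F (a * (d : F)))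
    (r : ℕ) (hrm : r ≤ m) :
    ghw (LinearMap.range L) r * (2 * p ^ r) = (p ^ r - 1) * p ^ m := by
  set B := Algebra.traceForm (ZMod p) F
  have hB : B.Nondegenerate := traceForm_nondegenerate _ _
  have hLB : ∀ a (d : D), L a d = B a d := hL
  have hfr : finrank (ZMod p) F = m := by
    refine Nat.pow_right_injective (Fact.out : p.Prime).two_le (?_ : p ^ _ = p ^ m)
    rw [← hq, card_eq_pow_finrank (K := ZMod p), ZMod.card]
  have hLinj := injective_of_separatingLeft_of_span_eq_top B _ L hB.1 (hD.span_eq_top _) hLB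
  obtain ⟨H₀, hH₀⟩ := exists_submodule_finrank_eq (K := ZMod p) (V := F) (hfr ▸ hrm)
  obtain ⟨U, hUL, hU, hUcard⟩ := exists_card_codeSupport_eq_ghw
    ⟨H₀.map L, LinearMap.map_le_range, (Submodule.equivMapOfInjective L hLinj H₀).finrank_eq ▸ hH₀⟩
  obtain ⟨H, rfl⟩ : ∃ H, H.map L = U := ⟨U.comap L, Submodule.map_comap_eq_self hUL⟩
  have hH : finrank (ZMod p) H = r := (Submodule.equivMapOfInjective L hLinj H).finrank_eq ▸ hU
  have hcount := hD.two_mul_card_codeSupport_add_card B L hLB H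
  rw [hUcard, natCard_eq_pow_finrank (K := ZMod p), Nat.card_zmod,
    LinearMap.BilinForm.finrank_orthogonal hB, hfr, hH, hq] at hcount
  have hpow : p ^ (m - r) * p ^ r = p ^ m := by rw [← pow_add, Nat.sub_add_cancel hrm]
  have hpr : 1 ≤ p ^ r := Nat.one_le_pow _ _ (Fact.out : p.Prime).pos
  zify [hpr] at hcount hpow ⊢
  linear_combination (p : ℤ) ^ r * hcount - hpow

/-- For a skew set `D`, the `r`-th generalized Hamming weight of `C_D` equals
`(1 - 1/p^r)·q/2`, i.e. `d_r(C_D)·(2p^r) = (p^r - 1)·q`. -/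
theorem stmt12 (p m : ℕ) [Fact p.Prime] (hp : Odd p)
    (F : Type) [Field F] [Fintype F] [Algebra (ZMod p) F]
    (hq : Fintype.card F = p ^ m)
    (D : Finset F) (hD : IsSkewSet (↑D : Set F))
    (L : F →ₗ[ZMod p] ({x // x ∈ D} → ZMod p))
    (hL : ∀ a (d : {x // x ∈ D}), L a d = Algebra.trace (ZMod p) F (a * (d : F)))
    (r : ℕ) (hr1 : 1 ≤ r) (hrm : r ≤ m) :
    ghw (LinearMap.range L) r * (2 * p ^ r) = (p ^ r - 1) * p ^ m :=
  stmt12_general p m F hq D hD L hL r hrm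
end

section
/- Let q = p^m, p an odd prime, N | q−1, θ = α^N, D = {θ^i : 0 ≤ i < n_1} with n_1 = (q−1)/N, N_1 = gcd(N,(q−1)/(p−1)), and let H be an r-dimensional F_p-subspace of F_q. Then the number of codeword positions 0 ≤ i < n_1 with Tr(aθ^i) = 0 for all a ∈ H equals n_1/p^r + (N_1/(p^r N)) Σ_{i=0}^{N_1−1} |H ∩ C_i^{(N_1,q)}| η_i^{(N_1,q)}. -/
open scoped Classical

/-- The canonical additive character `ψ(x) = ζ_p^{Tr(x)}` of `F_q`. -/
noncomputable def psi (p : ℕ) {F : Type} [Field F] [Fintype F] [Algebra (ZMod p) F]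
    (x : F) : ℂ :=
  Complex.exp (2 * Real.pi * Complex.I * ((Algebra.trace (ZMod p) F x).val : ℂ) / p)

/-- The `i`-th cyclotomic class `C_i^{(e,q)} = α^i ⟨α^e⟩` of order `e` in `F_q`. -/
noncomputable def cyc {F : Type} [Field F] [Fintype F] (α : F) (e i : ℕ) : Finset F :=
  (Finset.range ((Fintype.card F - 1) / e)).image (fun j => α ^ i * (α ^ e) ^ j)

/-- The Gauss period `η_i^{(e,q)} = Σ_{x ∈ C_i^{(e,q)}} ψ(x)`. -/
noncomputable def gp (p : ℕ) {F : Type} [Field F] [Fintype F] [Algebra (ZMod p) F]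
    (α : F) (e i : ℕ) : ℂ :=
  ∑ x ∈ cyc α e i, psi p x

/-!
Orthogonality of the trace character on `H` turns `p ^ r` times the count into
`n₁ + B` with `B = ∑_{a ∈ H ∖ 0} ∑_{i < n₁} ψ(a θ^i)`. As `H ∖ 0` is stable under `F_p^*`,
`(p - 1) B = ∑_{a ∈ H ∖ 0} ∑_{y ∈ F_p^*} ∑_{i < n₁} ψ(a y θ^i)`. The products `y θ^i` are the values
of the homomorphism `F_p^* × ⟨θ⟩ → F`, whose fibres all have the same size and whose image is
`C_0^{(N₁)}`: it consists of `(q - 1)/N₁`-th roots of unity and, by Bézout, contains `α^{N₁}` as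
a product of powers of `θ = α^N` and of `α^{(q-1)/(p-1)} ∈ F_p^*`.
So the inner double sum is a multiple of `∑_{w ∈ C_0^{(N₁)}} ψ(a w) = η_j` for `a ∈ C_j^{(N₁)}`,
and grouping the `a ∈ H ∖ 0` by class gives the formula.
-/

open Finset

lemma card_smul_sum_eq_sum_sum_smul {K V R : Type*} [Group K] [Fintype K] [MulAction K V]
    [AddCommMonoid R] {E : Finset V} (hE : ∀ c : K, ∀ a ∈ E, c • a ∈ E) (g : V → R) :
    Fintype.card K • ∑ a ∈ E, g a = ∑ a ∈ E, ∑ c : K, g (c • a) := by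
  rw [sum_comm, ← card_univ, ← sum_const]
  refine sum_congr rfl fun c _ => (sum_nbij' (c • ·) (c⁻¹ • ·) (hE c) (hE c⁻¹) ?_ ?_ ?_).symm
  · exact fun a _ => inv_smul_smul c a
  · exact fun a _ => smul_inv_smul c a
  · exact fun _ _ => rfl

lemma card_image_mul_sum_comp {G M R : Type*} [Group G] [Fintype G] [Monoid M] [DecidableEq M]
    [CommSemiring R] (f : G →* M) (g : M → R) :
    #(univ.image f) * ∑ x, g (f x) = Fintype.card G * ∑ y ∈ univ.image f, g y := by
  have hfiber : ∀ y ∈ univ.image f, #{x | f x = y} = #{x | f x = 1} := fun y hy =>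
    MonoidHom.card_fiber_eq_of_mem_range f (by simpa using hy) ⟨1, map_one f⟩
  rw [sum_comp, ← card_univ, card_eq_sum_card_image f univ, sum_congr rfl hfiber,
    sum_congr rfl fun y hy => by rw [hfiber y hy], sum_const, ← smul_sum]
  push_cast [nsmul_eq_mul]
  ring

lemma sum_zpowers_eq_sum_range {G M : Type*} [Group G] [Finite G] [AddCommMonoid M]
    (x : G) [Fintype (Subgroup.zpowers x)] (h : G → M) :
    ∑ t : Subgroup.zpowers x, h t = ∑ i ∈ range (orderOf x), h (x ^ i) := by
  rw [← (finEquivZPowers (isOfFinOrder_of_finite x)).sum_comp, ← Fin.sum_univ_eq_sum_range]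
  simp only [finEquivZPowers_apply]

section TraceCharacter

variable {p : ℕ} [Fact p.Prime] {F : Type} [Field F] [Fintype F] [Algebra (ZMod p) F]

lemma psi_eq_stdAddChar_trace (x : F) :
    psi p x = ZMod.stdAddChar (Algebra.trace (ZMod p) F x) := by
  rw [ZMod.stdAddChar_apply, ZMod.toCircle_apply, psi]

lemma psi_eq_one_iff {x : F} : psi p x = 1 ↔ Algebra.trace (ZMod p) F x = 0 := by
  rw [psi_eq_stdAddChar_trace, ← AddChar.map_zero_eq_one (ZMod.stdAddChar (N := p)),
    ZMod.injective_stdAddChar.eq_iff]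

lemma sum_psi_mul_submodule (H : Submodule (ZMod p) F) (x : F) :
    ∑ a ∈ univ.filter (· ∈ H), psi p (a * x) =
      if ∀ a ∈ H, Algebra.trace (ZMod p) F (a * x) = 0 then
        (p : ℂ) ^ Module.finrank (ZMod p) H else 0 := by
  let χ : AddChar H ℂ := ZMod.stdAddChar.compAddMonoidHom
    ((Algebra.trace (ZMod p) F).toAddMonoidHom.comp
      ((AddMonoidHom.mulRight x).comp H.subtype.toAddMonoidHom))
  have hχ (a : H) : χ a = psi p (a * x) := (psi_eq_stdAddChar_trace _).symm
  have hχ0 : χ = 0 ↔ ∀ a ∈ H, Algebra.trace (ZMod p) F (a * x) = 0 := by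
    simp only [AddChar.eq_zero_iff, hχ, psi_eq_one_iff, Subtype.forall]
  rw [sum_subtype (p := (· ∈ H)) _ (by simp), ← Fintype.sum_congr _ _ hχ, AddChar.sum_eq_ite,
    Module.card_eq_pow_finrank (K := ZMod p), ZMod.card]
  simp only [hχ0, Nat.cast_pow]

lemma pow_finrank_mul_card_filter_trace_eq_zero (H : Submodule (ZMod p) F) {ι : Type*}
    (s : Finset ι) (x : ι → F) :
    (p : ℂ) ^ Module.finrank (ZMod p) H *
        #(s.filter fun i => ∀ a ∈ H, Algebra.trace (ZMod p) F (a * x i) = 0) =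
      #s + ∑ a ∈ (univ.filter (· ∈ H)).erase 0, ∑ i ∈ s, psi p (a * x i) := by
  have hpsi0 : ∑ i ∈ s, psi p (0 * x i) = #s := by
    simp [psi_eq_one_iff.mpr]
  rw [← hpsi0, add_sum_erase _ (fun a => ∑ i ∈ s, psi p (a * x i)) (by simp),
    sum_comm]
  simp only [sum_psi_mul_submodule, sum_ite, sum_const_zero, add_zero, sum_const, nsmul_eq_mul]
  ring

end TraceCharacter

section Cyclotomy

variable {F : Type} [Field F] [Fintype F] {α : F} {e : ℕ}

omit [Field F] in
lemma card_sub_one_ne_zero [Nontrivial F] : Fintype.card F - 1 ≠ 0 :=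
  Nat.sub_ne_zero_of_lt Fintype.one_lt_card

lemma card_sub_one_div_ne_zero (he : e ∣ Fintype.card F - 1) : (Fintype.card F - 1) / e ≠ 0 := by
  intro h
  apply card_sub_one_ne_zero (F := F)
  rw [← Nat.mul_div_cancel' he, h, mul_zero]

lemma isPrimitiveRoot_pow_of_dvd (hα : IsPrimitiveRoot α (Fintype.card F - 1))
    (he : e ∣ Fintype.card F - 1) : IsPrimitiveRoot (α ^ e) ((Fintype.card F - 1) / e) :=
  hα.pow_of_dvd (ne_zero_of_dvd_ne_zero card_sub_one_ne_zero he) he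

lemma mem_cyc_iff (hα : IsPrimitiveRoot α (Fintype.card F - 1)) (he : e ∣ Fintype.card F - 1)
    {i : ℕ} {x : F} :
    x ∈ cyc α e i ↔
      x ^ ((Fintype.card F - 1) / e) = (α ^ i) ^ ((Fintype.card F - 1) / e) := by
  have hroot := isPrimitiveRoot_pow_of_dvd hα he
  have : NeZero ((Fintype.card F - 1) / e) := ⟨card_sub_one_div_ne_zero he⟩
  have hαi : α ^ i ≠ 0 := pow_ne_zero _ (hα.ne_zero card_sub_one_ne_zero)
  simp only [cyc, mem_image, mem_range]
  constructor
  · rintro ⟨j, -, rfl⟩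
    rw [mul_pow, pow_right_comm (α ^ e), hroot.pow_eq_one, one_pow, mul_one]
  · intro hx
    obtain ⟨j, hj, hjx⟩ := hroot.eq_pow_of_pow_eq_one (ξ := x / α ^ i) (by
      rw [div_pow, hx, div_self (pow_ne_zero _ hαi)])
    exact ⟨j, hj, by rw [hjx, mul_div_cancel₀ _ hαi]⟩

lemma mem_cyc_zero_iff (hα : IsPrimitiveRoot α (Fintype.card F - 1))
    (he : e ∣ Fintype.card F - 1) {x : F} :
    x ∈ cyc α e 0 ↔ x ^ ((Fintype.card F - 1) / e) = 1 := by
  rw [mem_cyc_iff hα he, pow_zero, one_pow]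

lemma ne_zero_of_mem_cyc (hα : IsPrimitiveRoot α (Fintype.card F - 1))
    (he : e ∣ Fintype.card F - 1) {i : ℕ} {x : F} (hx : x ∈ cyc α e i) : x ≠ 0 := by
  rintro rfl
  rw [mem_cyc_iff hα he, zero_pow (card_sub_one_div_ne_zero he)] at hx
  exact pow_ne_zero _ (pow_ne_zero _ (hα.ne_zero card_sub_one_ne_zero)) hx.symm

lemma card_cyc (hα : IsPrimitiveRoot α (Fintype.card F - 1)) (he : e ∣ Fintype.card F - 1)
    (i : ℕ) : #(cyc α e i) = (Fintype.card F - 1) / e := by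
  have hαi : α ^ i ≠ 0 := pow_ne_zero _ (hα.ne_zero card_sub_one_ne_zero)
  rw [cyc, card_image_of_injOn, card_range]
  intro j hj j' hj' h
  exact (isPrimitiveRoot_pow_of_dvd hα he).pow_inj (mem_range.mp hj) (mem_range.mp hj')
    (mul_left_cancel₀ hαi h)

lemma isPrimitiveRoot_pow_card_sub_one_div (hα : IsPrimitiveRoot α (Fintype.card F - 1))
    (he : e ∣ Fintype.card F - 1) :
    IsPrimitiveRoot (α ^ ((Fintype.card F - 1) / e)) e := by
  have := hα.pow_of_dvd (card_sub_one_div_ne_zero he) (Nat.div_dvd_of_dvd he)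
  rwa [Nat.div_div_self he card_sub_one_ne_zero] at this

lemma exists_mem_cyc (hα : IsPrimitiveRoot α (Fintype.card F - 1))
    (he : e ∣ Fintype.card F - 1) {x : F} (hx : x ≠ 0) : ∃ i < e, x ∈ cyc α e i := by
  have : NeZero e := ⟨ne_zero_of_dvd_ne_zero card_sub_one_ne_zero he⟩
  obtain ⟨i, hi, hix⟩ := (isPrimitiveRoot_pow_card_sub_one_div hα he).eq_pow_of_pow_eq_one
    (ξ := x ^ ((Fintype.card F - 1) / e)) (by
      rw [← pow_mul, Nat.div_mul_cancel he, FiniteField.pow_card_sub_one_eq_one x hx])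
  exact ⟨i, hi, (mem_cyc_iff hα he).mpr (by rw [← hix, pow_right_comm])⟩

lemma eq_of_mem_cyc_of_mem_cyc (hα : IsPrimitiveRoot α (Fintype.card F - 1))
    (he : e ∣ Fintype.card F - 1) {i j : ℕ} (hi : i < e) (hj : j < e) {x : F}
    (hxi : x ∈ cyc α e i) (hxj : x ∈ cyc α e j) : i = j := by
  rw [mem_cyc_iff hα he] at hxi hxj
  refine (isPrimitiveRoot_pow_card_sub_one_div hα he).pow_inj hi hj ?_
  rw [pow_right_comm, ← hxi, hxj, pow_right_comm]

lemma sum_erase_zero_eq_sum_sum_cyc {R : Type*} [AddCommMonoid R]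
    (hα : IsPrimitiveRoot α (Fintype.card F - 1)) (he : e ∣ Fintype.card F - 1)
    (s : Finset F) (g : F → R) :
    ∑ x ∈ s.erase 0, g x = ∑ i ∈ range e, ∑ x ∈ s.filter (· ∈ cyc α e i), g x := by
  rw [← sum_biUnion]
  · congr 1
    ext x
    simp only [mem_erase, mem_biUnion, mem_range, mem_filter]
    constructor
    · rintro ⟨hx0, hxs⟩
      obtain ⟨i, hi, hxi⟩ := exists_mem_cyc hα he hx0
      exact ⟨i, hi, hxs, hxi⟩
    · rintro ⟨i, -, hxs, hxi⟩
      exact ⟨ne_zero_of_mem_cyc hα he hxi, hxs⟩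
  · intro i hi j hj hij
    refine disjoint_left.mpr fun x hxi hxj => hij ?_
    exact eq_of_mem_cyc_of_mem_cyc hα he (mem_range.mp hi) (mem_range.mp hj)
      (mem_filter.mp hxi).2 (mem_filter.mp hxj).2

lemma sum_mul_cyc_zero {R : Type*} [AddCommMonoid R]
    (hα : IsPrimitiveRoot α (Fintype.card F - 1)) (he : e ∣ Fintype.card F - 1)
    {i : ℕ} {a : F} (ha : a ∈ cyc α e i) (g : F → R) :
    ∑ w ∈ cyc α e 0, g (a * w) = ∑ x ∈ cyc α e i, g x := by
  have ha0 := ne_zero_of_mem_cyc hα he ha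
  rw [mem_cyc_iff hα he] at ha
  refine sum_nbij' (a * ·) (a⁻¹ * ·) ?_ ?_ ?_ ?_ fun _ _ => rfl
  · intro w hw
    rw [mem_cyc_zero_iff hα he] at hw
    rw [mem_cyc_iff hα he, mul_pow, hw, mul_one, ha]
  · intro x hx
    rw [mem_cyc_iff hα he] at hx
    rw [mem_cyc_zero_iff hα he, mul_pow, inv_pow, hx, ← ha,
      inv_mul_cancel₀ (pow_ne_zero _ ha0)]
  · exact fun w _ => inv_mul_cancel_left₀ ha0 w
  · exact fun x _ => mul_inv_cancel_left₀ ha0 x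

end Cyclotomy

section PrimeFieldUnits

variable (p : ℕ) [Fact p.Prime] {F : Type} [Field F] [Algebra (ZMod p) F]

noncomputable def unitsMulZPowers (θ : Fˣ) : (ZMod p)ˣ × Subgroup.zpowers θ →* F :=
  ((algebraMap (ZMod p) F : ZMod p →* F).comp (Units.coeHom _)).coprod
    ((Units.coeHom F).comp (Subgroup.zpowers θ).subtype)

variable {p}

lemma unitsMulZPowers_apply (θ : Fˣ) (y : (ZMod p)ˣ) (t : Subgroup.zpowers θ) :
    unitsMulZPowers p θ (y, t) = algebraMap (ZMod p) F y * (t : Fˣ) := rfl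

variable (p) [Fintype F]

lemma sub_one_dvd_card_sub_one : p - 1 ∣ Fintype.card F - 1 := by
  rw [Module.card_eq_pow_finrank (K := ZMod p), ZMod.card]
  exact Nat.sub_one_dvd_pow_sub_one p _

variable {p}

lemma exists_units_algebraMap_eq {x : F} (hx : x ^ (p - 1) = 1) :
    ∃ y : (ZMod p)ˣ, algebraMap (ZMod p) F y = x := by
  have : CharP F p := charP_of_injective_algebraMap' (ZMod p) p
  have hxp : x ^ p = x := by
    rw [← Nat.sub_one_add_one (Fact.out : p.Prime).ne_zero, pow_succ, hx, one_mul]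
  have hbot : x ∈ (ZMod.castHom dvd_rfl F).fieldRange := by
    rw [ZMod.fieldRange_castHom_eq_bot, Subfield.mem_bot_iff_pow_eq_self F p]
    exact hxp
  obtain ⟨y, hy⟩ := hbot
  rw [RingHom.ext_zmod (ZMod.castHom dvd_rfl F) (algebraMap (ZMod p) F)] at hy
  have hx0 : x ≠ 0 :=
    ne_zero_pow (Nat.sub_ne_zero_of_lt (Fact.out : p.Prime).one_lt) (hx ▸ one_ne_zero)
  exact ⟨Units.mk0 y (by rintro rfl; exact hx0 (by rw [← hy, map_zero])), hy⟩

variable {α : F} {N : ℕ}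

lemma pow_gcd_mem_mrange_unitsMulZPowers (hα : IsPrimitiveRoot α (Fintype.card F - 1))
    {θ : Fˣ} (hθ : (θ : F) = α ^ N) :
    α ^ N.gcd ((Fintype.card F - 1) / (p - 1)) ∈ MonoidHom.mrange (unitsMulZPowers p θ) := by
  set s := (Fintype.card F - 1) / (p - 1)
  have hα0 : α ≠ 0 := hα.ne_zero card_sub_one_ne_zero
  obtain ⟨y, hy⟩ := exists_units_algebraMap_eq (x := α ^ s) (by
    rw [← pow_mul, Nat.div_mul_cancel (sub_one_dvd_card_sub_one p), hα.pow_eq_one])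
  refine ⟨(y ^ N.gcdB s, ⟨θ ^ N.gcdA s, Subgroup.zpow_mem_zpowers θ _⟩), ?_⟩
  rw [unitsMulZPowers_apply, Units.val_zpow_eq_zpow_val, Units.val_zpow_eq_zpow_val, map_zpow₀,
    hy, hθ, ← zpow_natCast, ← zpow_natCast, ← zpow_natCast, ← zpow_mul, ← zpow_mul,
    ← zpow_add₀ hα0, Nat.gcd_eq_gcd_ab, add_comm]

lemma image_unitsMulZPowers (hα : IsPrimitiveRoot α (Fintype.card F - 1))
    (hN : N ∣ Fintype.card F - 1) {θ : Fˣ} (hθ : (θ : F) = α ^ N) :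
    univ.image (unitsMulZPowers p θ) = cyc α (N.gcd ((Fintype.card F - 1) / (p - 1))) 0 := by
  set Q := Fintype.card F - 1
  set s := Q / (p - 1)
  have hs : s ∣ Q := Nat.div_dvd_of_dvd (sub_one_dvd_card_sub_one p)
  have hN₁ : N.gcd s ∣ Q := (Nat.gcd_dvd_left N s).trans hN
  ext x
  rw [mem_cyc_zero_iff hα hN₁]
  simp only [mem_image, mem_univ, true_and]
  constructor
  · rintro ⟨⟨y, t⟩, rfl⟩
    rw [← map_pow]
    suffices (y, t) ^ (Q / N.gcd s) = 1 by rw [this, map_one]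
    have hθord : orderOf θ = Q / N := by
      rw [← orderOf_units, hθ, (isPrimitiveRoot_pow_of_dvd hα hN).eq_orderOf]
    obtain ⟨c, hc⟩ : p - 1 ∣ Q / N.gcd s := by
      rw [← Nat.div_div_self (sub_one_dvd_card_sub_one p) (card_sub_one_ne_zero (F := F))]
      exact Nat.div_dvd_div_left hs (Nat.gcd_dvd_right N s)
    obtain ⟨c', hc'⟩ : Nat.card (Subgroup.zpowers θ) ∣ Q / N.gcd s := by
      rw [Nat.card_zpowers, hθord]
      exact Nat.div_dvd_div_left hN (Nat.gcd_dvd_left N s)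
    refine Prod.ext ?_ ?_
    · rw [Prod.pow_fst, hc, pow_mul, ZMod.units_pow_card_sub_one_eq_one, one_pow, Prod.fst_one]
    · rw [Prod.pow_snd, hc', pow_mul, pow_card_eq_one', one_pow, Prod.snd_one]
  · intro hx
    have : NeZero (Q / N.gcd s) := ⟨card_sub_one_div_ne_zero hN₁⟩
    obtain ⟨j, -, rfl⟩ := (isPrimitiveRoot_pow_of_dvd hα hN₁).eq_pow_of_pow_eq_one hx
    exact pow_mem (pow_gcd_mem_mrange_unitsMulZPowers hα hθ) j

end PrimeFieldUnits

section Covering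

variable {p : ℕ} [Fact p.Prime] {F : Type} [Field F] [Fintype F] [Algebra (ZMod p) F]
  {α : F} {N : ℕ}

lemma card_cyc_mul_sum_units_sum_range {R : Type*} [CommSemiring R]
    (hα : IsPrimitiveRoot α (Fintype.card F - 1)) (hN : N ∣ Fintype.card F - 1) (g : F → R) :
    ((Fintype.card F - 1) / N.gcd ((Fintype.card F - 1) / (p - 1)) : ℕ) *
        ∑ y : (ZMod p)ˣ, ∑ i ∈ range ((Fintype.card F - 1) / N),
          g (algebraMap (ZMod p) F y * (α ^ N) ^ i) =
      ((p - 1) * ((Fintype.card F - 1) / N) : ℕ) *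
        ∑ w ∈ cyc α (N.gcd ((Fintype.card F - 1) / (p - 1))) 0, g w := by
  let θ := Units.mk0 (α ^ N) (pow_ne_zero _ (hα.ne_zero card_sub_one_ne_zero))
  have hθ : orderOf θ = (Fintype.card F - 1) / N := by
    rw [← orderOf_units, Units.val_mk0, (isPrimitiveRoot_pow_of_dvd hα hN).eq_orderOf]
  have hN₁ := (Nat.gcd_dvd_left N ((Fintype.card F - 1) / (p - 1))).trans hN
  have key := card_image_mul_sum_comp (R := R) (unitsMulZPowers p θ) g
  rw [image_unitsMulZPowers hα hN rfl, card_cyc hα hN₁, Fintype.card_prod, ZMod.card_units,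
    Fintype.card_zpowers, hθ, Fintype.sum_prod_type] at key
  rw [← key]
  congr 2 with y
  rw [← hθ]
  simpa [θ, unitsMulZPowers_apply] using
    (sum_zpowers_eq_sum_range θ fun t => g (algebraMap (ZMod p) F y * t)).symm

end Covering

section GaussPeriods

variable {p : ℕ} {F : Type} [Field F] [Fintype F] [Algebra (ZMod p) F] {α : F}

lemma sum_erase_zero_sum_cyc_zero {e : ℕ} (hα : IsPrimitiveRoot α (Fintype.card F - 1))
    (he : e ∣ Fintype.card F - 1) (s : Finset F) :
    ∑ a ∈ s.erase 0, ∑ w ∈ cyc α e 0, psi p (a * w) =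
      ∑ j ∈ range e, #(s.filter (· ∈ cyc α e j)) * gp p α e j := by
  rw [sum_erase_zero_eq_sum_sum_cyc hα he]
  refine sum_congr rfl fun j _ => ?_
  rw [sum_congr rfl fun a ha => sum_mul_cyc_zero hα he (mem_filter.mp ha).2 _, sum_const,
    nsmul_eq_mul, gp]

variable [Fact p.Prime] {N : ℕ}

lemma card_cyc_mul_sum_nonzero_sum_range (hα : IsPrimitiveRoot α (Fintype.card F - 1))
    (hN : N ∣ Fintype.card F - 1) (H : Submodule (ZMod p) F) :
    ((Fintype.card F - 1) / N.gcd ((Fintype.card F - 1) / (p - 1)) : ℕ) *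
        ∑ a ∈ (univ.filter (· ∈ H)).erase 0, ∑ i ∈ range ((Fintype.card F - 1) / N),
          psi p (a * (α ^ N) ^ i) =
      ((Fintype.card F - 1) / N : ℕ) *
        ∑ j ∈ range (N.gcd ((Fintype.card F - 1) / (p - 1))),
          #(univ.filter fun x => x ∈ H ∧ x ∈ cyc α (N.gcd ((Fintype.card F - 1) / (p - 1))) j) *
            gp p α (N.gcd ((Fintype.card F - 1) / (p - 1))) j := by
  set Q := Fintype.card F - 1
  set N₁ := N.gcd (Q / (p - 1))
  set E := (univ.filter (· ∈ H)).erase 0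
  have hE (c : (ZMod p)ˣ) (a : F) (ha : a ∈ E) : c • a ∈ E := by
    simp only [E, mem_erase, mem_filter, mem_univ, true_and, ne_eq, smul_eq_zero_iff_eq] at ha ⊢
    exact ⟨ha.1, H.smul_of_tower_mem c ha.2⟩
  have hscale := card_smul_sum_eq_sum_sum_smul hE fun a =>
    ∑ i ∈ range (Q / N), psi p (a * (α ^ N) ^ i)
  have hp : ((p - 1 : ℕ) : ℂ) ≠ 0 :=
    Nat.cast_ne_zero.mpr (Nat.sub_ne_zero_of_lt (Fact.out : p.Prime).one_lt)
  refine mul_left_cancel₀ hp ?_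
  rw [ZMod.card_units, nsmul_eq_mul] at hscale
  calc ((p - 1 : ℕ) : ℂ) * ((Q / N₁ : ℕ) * ∑ a ∈ E, ∑ i ∈ range (Q / N), psi p (a * (α ^ N) ^ i))
      = ∑ a ∈ E, (Q / N₁ : ℕ) * ∑ c : (ZMod p)ˣ, ∑ i ∈ range (Q / N),
          psi p (a * (algebraMap (ZMod p) F c * (α ^ N) ^ i)) := by
        rw [mul_left_comm, hscale, mul_sum]
        simp only [Units.smul_def, Algebra.smul_def, mul_assoc, mul_left_comm]
    _ = ∑ a ∈ E, ((p - 1) * (Q / N) : ℕ) * ∑ w ∈ cyc α N₁ 0, psi p (a * w) :=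
        sum_congr rfl fun a _ => card_cyc_mul_sum_units_sum_range hα hN fun w => psi p (a * w)
    _ = _ := by
        rw [← mul_sum, sum_erase_zero_sum_cyc_zero hα ((Nat.gcd_dvd_left _ _).trans hN)]
        simp only [filter_filter]
        push_cast
        ring

end GaussPeriods

theorem stmt18_general (p m N N₁ n₁ : ℕ) [Fact p.Prime]
    (F : Type) [Field F] [Fintype F] [Algebra (ZMod p) F]
    (hq : Fintype.card F = p ^ m)
    (α : F) (hα : orderOf α = p ^ m - 1)
    (hN : N ∣ p ^ m - 1)
    (hn₁ : n₁ = (p ^ m - 1) / N)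
    (hN₁ : N₁ = Nat.gcd N ((p ^ m - 1) / (p - 1)))
    (H : Submodule (ZMod p) F) (r : ℕ)
    (hH : Module.finrank (ZMod p) ↥H = r) :
    (((Finset.range n₁).filter
        (fun i => ∀ a ∈ H, Algebra.trace (ZMod p) F (a * (α ^ N) ^ i) = 0)).card : ℂ)
      = (n₁ : ℂ) / p ^ r + ((N₁ : ℂ) / (p ^ r * N)) *
          ∑ i ∈ Finset.range N₁,
            ((Finset.univ.filter (fun x : F => x ∈ H ∧ x ∈ cyc α N₁ i)).card : ℂ)
              * gp p α N₁ i := by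
  rw [← hq] at hα hN hn₁ hN₁
  have hprim : IsPrimitiveRoot α (Fintype.card F - 1) := hα ▸ IsPrimitiveRoot.orderOf α
  have hN₁Q : N₁ ∣ Fintype.card F - 1 := hN₁ ▸ (Nat.gcd_dvd_left _ _).trans hN
  have hcount := pow_finrank_mul_card_filter_trace_eq_zero H (range n₁) fun i => (α ^ N) ^ i
  have hsum := card_cyc_mul_sum_nonzero_sum_range hprim hN H
  rw [hH, card_range] at hcount
  rw [← hn₁, ← hN₁] at hsum
  set k := (Fintype.card F - 1) / N₁
  set G := ∑ i ∈ range N₁, (#(univ.filter fun x => x ∈ H ∧ x ∈ cyc α N₁ i) : ℂ) * gp p α N₁ i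
  have hQ : (N : ℂ) * n₁ = N₁ * k := by
    rw [hn₁]
    exact_mod_cast (Nat.mul_div_cancel' hN).trans (Nat.mul_div_cancel' hN₁Q).symm
  have hk : (k : ℂ) ≠ 0 := Nat.cast_ne_zero.mpr (card_sub_one_div_ne_zero hN₁Q)
  have hN0 : (N : ℂ) ≠ 0 := Nat.cast_ne_zero.mpr (ne_zero_of_dvd_ne_zero card_sub_one_ne_zero hN)
  have hp : (p : ℂ) ^ r ≠ 0 := pow_ne_zero _ (Nat.cast_ne_zero.mpr (Fact.out : p.Prime).ne_zero)
  field_simp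
  refine mul_left_cancel₀ hk ?_
  linear_combination (k * N : ℂ) * hcount + N * hsum + G * hQ

/-- For an `r`-dimensional `F_p`-subspace `H` of `F_q`, the number of positions
`0 ≤ i < n₁` with `Tr(aθ^i) = 0` for all `a ∈ H` equals
`n₁/p^r + (N₁/(p^r N)) Σ_i |H ∩ C_i^{(N₁,q)}| η_i^{(N₁,q)}`. -/
theorem stmt18 (p m N N₁ n₁ : ℕ) [Fact p.Prime] (hp : Odd p)
    (F : Type) [Field F] [Fintype F] [Algebra (ZMod p) F]
    (hq : Fintype.card F = p ^ m)
    (α : F) (hα : orderOf α = p ^ m - 1)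
    (hN : N ∣ p ^ m - 1) (hN0 : 0 < N)
    (hn₁ : n₁ = (p ^ m - 1) / N)
    (hN₁ : N₁ = Nat.gcd N ((p ^ m - 1) / (p - 1)))
    (H : Submodule (ZMod p) F) (r : ℕ)
    (hH : Module.finrank (ZMod p) ↥H = r) :
    (((Finset.range n₁).filter
        (fun i => ∀ a ∈ H, Algebra.trace (ZMod p) F (a * (α ^ N) ^ i) = 0)).card : ℂ)
      = (n₁ : ℂ) / p ^ r + ((N₁ : ℂ) / (p ^ r * N)) *
          ∑ i ∈ Finset.range N₁,
            ((Finset.univ.filter (fun x : F => x ∈ H ∧ x ∈ cyc α N₁ i)).card : ℂ)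
              * gp p α N₁ i :=
  stmt18_general p m N N₁ n₁ F hq α hα hN hn₁ hN₁ H r hH
end
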